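/- arXiv:2101.10542 — 7 statements merged into one kernel-verified Lean document; each statement's English description precedes it below -/
import Mathlib

section
/- Fix k ≥ 1 and γ ∈ (0, 1 − 1/n). Suppose that for every s ∈ {1,…,k} the error satisfies 0 < ε_s ≤ 1 − 1/n − γ and α_s is given by the formula α_s = (1/(2(n−1)))·log((n−1)(1−ε_s)/ε_s). Then ρ := −log φ(1 − 1/n − γ) > 0 and the d_1-probability of misclassification-relevant points satisfies Σ_{p ∈ P : Ψ^k_{y(p)}(p) ≤ 0} d_1(p) ≤ e^{−ρ·k}. -/
open Finset

noncomputable section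

variable {P A : Type*}

/-- The multiplicative weight factor `exp(−α·[(n−1)·𝟙(h(p)=y(p)) − 𝟙(h(p)≠y(p))])`. -/
def wfac [DecidableEq A] (n : ℕ) (αs : ℝ) (hs y : P → A) (p : P) : ℝ :=
  Real.exp (-(αs * (((n : ℝ) - 1) * (if hs p = y p then 1 else 0) -
    (if hs p = y p then 0 else 1))))

/-- The weight sequence: `dseq n α h y s` is the distribution `d_s` (for `s ≥ 1`),
with `d_1` uniform and `d_{s+1}(p) = d_s(p)·wfac(α_s,h_s)(p) / Z_s`. -/
def dseq [Fintype P] [DecidableEq A] (n : ℕ) (α : ℕ → ℝ) (h : ℕ → P → A) (y : P → A) :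
    ℕ → P → ℝ
  | 0 => fun _ => 1 / (Fintype.card P : ℝ)
  | 1 => fun _ => 1 / (Fintype.card P : ℝ)
  | (s + 2) => fun p =>
      dseq n α h y (s + 1) p * wfac n (α (s + 1)) (h (s + 1)) y p /
        ∑ q, dseq n α h y (s + 1) q * wfac n (α (s + 1)) (h (s + 1)) y q

/-- The normalizer `Z_s = Σ_p d_s(p)·exp(−α_s·[(n−1)·𝟙(h_s(p)=y(p)) − 𝟙(h_s(p)≠y(p))])`. -/
def Zseq [Fintype P] [DecidableEq A] (n : ℕ) (α : ℕ → ℝ) (h : ℕ → P → A) (y : P → A)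
    (s : ℕ) : ℝ :=
  ∑ q, dseq n α h y s q * wfac n (α s) (h s) y q

/-- `F^k_a(p) = Σ_{s=1}^k α_s·𝟙[h_s(p)=a]`. -/
def Fsc [DecidableEq A] (α : ℕ → ℝ) (h : ℕ → P → A) (k : ℕ) (a : A) (p : P) : ℝ :=
  ∑ s ∈ Finset.Icc 1 k, α s * (if h s p = a then 1 else 0)

/-- `Ψ^k_a(p) = (n−1)·F^k_a(p) − Σ_{a'≠a} F^k_{a'}(p)` where `n = |A|`. -/
def Psi [Fintype A] [DecidableEq A] (α : ℕ → ℝ) (h : ℕ → P → A) (k : ℕ) (a : A) (p : P) : ℝ :=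
  ((Fintype.card A : ℝ) - 1) * Fsc α h k a p - ∑ a' ∈ Finset.univ.erase a, Fsc α h k a' p

/-- The error `ε_s = Σ_{p : h_s(p)≠y(p)} d_s(p)`. -/
def err [Fintype P] [DecidableEq A] (n : ℕ) (α : ℕ → ℝ) (h : ℕ → P → A) (y : P → A)
    (s : ℕ) : ℝ :=
  ∑ p ∈ Finset.univ.filter (fun p => h s p ≠ y p), dseq n α h y s p

/-- `φ(ε) = (n−1)^{−1/2}·ε^{1/2}·(1−ε)^{1/2}
      + (n−1)^{1/(2(n−1))}·(1−ε)^{1/(2(n−1))}·ε^{1−1/(2(n−1))}`. -/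
def phi (n : ℕ) (ε : ℝ) : ℝ :=
  ((n : ℝ) - 1) ^ (-(1 / 2) : ℝ) * ε ^ ((1 : ℝ) / 2) * (1 - ε) ^ ((1 : ℝ) / 2) +
    ((n : ℝ) - 1) ^ (1 / (2 * ((n : ℝ) - 1))) * (1 - ε) ^ (1 / (2 * ((n : ℝ) - 1))) *
      ε ^ (1 - 1 / (2 * ((n : ℝ) - 1)))

/-!
Unrolling the recursion gives `d_{k+1}(p) · ∏ Z_s = d_1(p) · exp (-Ψ^k_{y(p)}(p))`;
since `exp (-Ψ) ≥ 𝟙[Ψ ≤ 0]` and `d_{k+1}` is a probability vector, the mass in question is at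
most `∏ Z_s`. With `m = n - 1`, each `Z_s` equals `(1 - ε_s) e^{-m α_s} + ε_s e^{α_s}`, which at the
prescribed `α_s` is `φ(ε_s)`. This value increases with the error, so `Z_s ≤ φ(1 - 1/n - γ)`,
and Bernoulli's inequality `u^{1/m} ≤ 1 + (u - 1)/m` shows `φ(1 - 1/n - γ) < 1`.
-/

open Real

/-- `Z_s` as a function of `m = n - 1`, the error `ε = ε_s` and the step size `a = α_s`. -/
def roundNormalizer (m ε a : ℝ) : ℝ := (1 - ε) * exp (-(m * a)) + ε * exp a

def sammeStep (m ε : ℝ) : ℝ := 1 / (2 * m) * log (m * (1 - ε) / ε)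

section RoundNormalizer

variable {m ε ε' a b : ℝ}

lemma roundNormalizer_pos (h0 : 0 < ε) (h1 : ε < 1) : 0 < roundNormalizer m ε a := by
  unfold roundNormalizer
  have := sub_pos.2 h1
  positivity

/-- `hderiv` says that the derivative in the step size is nonpositive at `a`; the tangent-line
bounds for the two convex exponentials do the rest. -/
lemma roundNormalizer_le_of_le_of_deriv_nonpos (hε0 : 0 ≤ ε) (hε1 : ε ≤ 1) (hba : b ≤ a)
    (hderiv : ε * exp a ≤ m * (1 - ε) * exp (-(m * a))) :
    roundNormalizer m ε a ≤ roundNormalizer m ε b := by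
  have hb : exp a * (b - a + 1) ≤ exp b := by
    simpa [← exp_add] using mul_le_mul_of_nonneg_left (add_one_le_exp (b - a)) (exp_pos a).le
  have hmb : exp (-(m * a)) * (1 + m * (a - b)) ≤ exp (-(m * b)) := by
    have := mul_le_mul_of_nonneg_left (add_one_le_exp (m * (a - b))) (exp_pos (-(m * a))).le
    rwa [← exp_add, show -(m * a) + m * (a - b) = -(m * b) by ring, add_comm] at this
  unfold roundNormalizer
  nlinarith [mul_le_mul_of_nonneg_left hb hε0, mul_le_mul_of_nonneg_left hmb (sub_nonneg.2 hε1),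
    mul_le_mul_of_nonneg_left hderiv (sub_nonneg.2 hba)]

lemma roundNormalizer_le_of_error_le (hm : 0 ≤ m) (ha : 0 ≤ a) (hε : ε ≤ ε') :
    roundNormalizer m ε a ≤ roundNormalizer m ε' a := by
  have : exp (-(m * a)) ≤ exp a := exp_le_exp.2 (by nlinarith)
  unfold roundNormalizer
  nlinarith

lemma one_lt_mul_one_sub_div (hm : 0 < m) (h0 : 0 < ε) (hε : ε < m / (m + 1)) :
    1 < m * (1 - ε) / ε := by
  rw [lt_div_iff₀ (by linarith)] at hε
  rw [one_lt_div h0]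
  linarith

lemma exp_two_mul_sammeStep (hm : 0 < m) (h0 : 0 < ε) (h1 : ε < 1) :
    exp (2 * m * sammeStep m ε) = m * (1 - ε) / ε := by
  have : 0 < m * (1 - ε) / ε := by have := sub_pos.2 h1; positivity
  rw [sammeStep, ← mul_assoc, mul_one_div_cancel (by positivity), one_mul, exp_log this]

lemma sammeStep_nonneg (hm : 0 < m) (h0 : 0 < ε) (hε : ε < m / (m + 1)) : 0 ≤ sammeStep m ε :=
  mul_nonneg (by positivity) (log_nonneg (one_lt_mul_one_sub_div hm h0 hε).le)

lemma sammeStep_le_of_le (hm : 0 < m) (h0 : 0 < ε) (hε : ε ≤ ε') (h1 : ε' < 1) :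
    sammeStep m ε' ≤ sammeStep m ε := by
  have h0' : 0 < ε' := h0.trans_le hε
  have hr : m * (1 - ε') / ε' ≤ m * (1 - ε) / ε := by
    rw [div_le_div_iff₀ h0' h0]; nlinarith
  exact mul_le_mul_of_nonneg_left (log_le_log (by have := sub_pos.2 h1; positivity) hr)
    (by positivity)

/-- Since `2m ≥ m + 1`, the SAMME step `log r / (2m)` lies left of the minimiser `log r / (m + 1)`
of `roundNormalizer m ε`; moving to a larger error lowers the step and raises the curve. -/
lemma roundNormalizer_sammeStep_mono (hm : 1 ≤ m) (h0 : 0 < ε) (hε : ε ≤ ε')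
    (hε' : ε' < m / (m + 1)) :
    roundNormalizer m ε (sammeStep m ε) ≤ roundNormalizer m ε' (sammeStep m ε') := by
  have hm0 : 0 < m := by linarith
  have h1' : ε' < 1 := hε'.trans ((div_lt_one (by linarith)).2 (by linarith))
  have h1 : ε < 1 := hε.trans_lt h1'
  set a := sammeStep m ε
  have ha : 0 ≤ a := sammeStep_nonneg hm0 h0 (hε.trans_lt hε')
  have hderiv : ε * exp a ≤ m * (1 - ε) * exp (-(m * a)) := by
    have : exp ((m + 1) * a) ≤ m * (1 - ε) / ε := by
      rw [← exp_two_mul_sammeStep hm0 h0 h1]; exact exp_le_exp.2 (by nlinarith)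
    rw [le_div_iff₀ h0, show (m + 1) * a = a + m * a by ring, exp_add] at this
    have hcancel : exp (m * a) * exp (-(m * a)) = 1 := by rw [← exp_add, add_neg_cancel, exp_zero]
    calc ε * exp a = exp a * exp (m * a) * ε * exp (-(m * a)) := by
          linear_combination (-(ε * exp a)) * hcancel
      _ ≤ m * (1 - ε) * exp (-(m * a)) := by gcongr
  calc roundNormalizer m ε a
      ≤ roundNormalizer m ε (sammeStep m ε') :=
        roundNormalizer_le_of_le_of_deriv_nonpos h0.le h1.le (sammeStep_le_of_le hm0 h0 hε h1')
          hderiv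
    _ ≤ roundNormalizer m ε' (sammeStep m ε') :=
        roundNormalizer_le_of_error_le hm0.le (sammeStep_nonneg hm0 (h0.trans_le hε) hε') hε

lemma roundNormalizer_sammeStep_lt_one (hm : 1 ≤ m) (h0 : 0 < ε) (hε : ε < m / (m + 1)) :
    roundNormalizer m ε (sammeStep m ε) < 1 := by
  have hm0 : 0 < m := by linarith
  have h1 : ε < 1 := hε.trans ((div_lt_one (by linarith)).2 (by linarith))
  set a := sammeStep m ε
  set u := exp (m * a)
  have hu : 1 < u := one_lt_exp_iff.2 (by
    have := one_lt_mul_one_sub_div hm0 h0 hε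
    rw [← exp_two_mul_sammeStep hm0 h0 h1, one_lt_exp_iff] at this
    nlinarith)
  have hu2 : ε * u ^ 2 = m * (1 - ε) := by
    rw [← exp_nat_mul, ← mul_assoc, Nat.cast_ofNat, exp_two_mul_sammeStep hm0 h0 h1]
    field_simp
  have hexp : exp a = u ^ (1 / m) := by
    rw [← exp_mul, mul_one_div, mul_div_cancel_left₀ _ hm0.ne']
  have hbern : u ^ (1 / m) ≤ 1 + 1 / m * (u - 1) := by
    simpa using rpow_one_add_le_one_add_mul_self (s := u - 1) (by linarith)
      (by positivity : (0 : ℝ) ≤ 1 / m) ((div_le_one hm0).2 hm)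
  have hinv : exp (-(m * a)) = u⁻¹ := exp_neg _
  have hfirst : (1 - ε) * u⁻¹ = ε * u / m := by
    field_simp
    linarith
  rw [roundNormalizer, hinv, hexp, hfirst]
  calc ε * u / m + ε * u ^ (1 / m) ≤ ε * u / m + ε * (1 + 1 / m * (u - 1)) := by gcongr
    _ < 1 := by
      field_simp
      nlinarith [mul_pos h0 (pow_pos (sub_pos.2 hu) 2)]

end RoundNormalizer

lemma phi_eq_roundNormalizer_sammeStep {n : ℕ} (hn : 2 ≤ n) {ε : ℝ} (h0 : 0 < ε)
    (h1 : ε < 1) :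
    phi n ε = roundNormalizer (n - 1) ε (sammeStep (n - 1) ε) := by
  have hm : (0 : ℝ) < n - 1 := by
    have : (2 : ℝ) ≤ n := by exact_mod_cast hn
    linarith
  have h1' : 0 < 1 - ε := sub_pos.2 h1
  have hlog : log ((n - 1) * (1 - ε) / ε) = log (n - 1) + log (1 - ε) - log ε := by
    rw [log_div (by positivity) h0.ne', log_mul hm.ne' h1'.ne']
  have hmul : ∀ {x : ℝ}, 0 < x → ∀ X, x * exp X = exp (log x + X) := fun hx X => by
    rw [exp_add, exp_log hx]
  simp only [phi, roundNormalizer, sammeStep, rpow_def_of_pos hm, rpow_def_of_pos h0,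
    rpow_def_of_pos h1', hlog, hmul h0, hmul h1', ← exp_add]
  congr 2 <;> field_simp <;> ring

section WeightSequence

variable [Fintype P] [DecidableEq A] (n : ℕ) (α : ℕ → ℝ) (h : ℕ → P → A) (y : P → A)

lemma dseq_succ {s : ℕ} (hs : 1 ≤ s) (p : P) :
    dseq n α h y (s + 1) p = dseq n α h y s p * wfac n (α s) (h s) y p / Zseq n α h y s := by
  obtain ⟨t, rfl⟩ := Nat.exists_eq_add_of_le' hs
  rfl

variable [Nonempty P]

lemma dseq_pos : ∀ s (p : P), 0 < dseq n α h y s p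
  | 0, _ | 1, _ => one_div_pos.2 (Nat.cast_pos.2 Fintype.card_pos)
  | s + 2, p =>
    div_pos (mul_pos (dseq_pos (s + 1) p) (exp_pos _))
      (sum_pos (fun q _ => mul_pos (dseq_pos (s + 1) q) (exp_pos _)) univ_nonempty)

lemma Zseq_pos (s : ℕ) : 0 < Zseq n α h y s :=
  sum_pos (fun q _ => mul_pos (dseq_pos n α h y s q) (exp_pos _)) univ_nonempty

lemma sum_dseq {s : ℕ} (hs : 1 ≤ s) : ∑ p, dseq n α h y s p = 1 := by
  induction s, hs using Nat.le_induction with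
  | base =>
    simp only [dseq, sum_const, card_univ, nsmul_eq_mul]
    field_simp [(Nat.cast_pos.2 Fintype.card_pos : (0 : ℝ) < Fintype.card P).ne']
  | succ s hs _ =>
    simp only [dseq_succ n α h y hs, ← sum_div]
    exact div_self (Zseq_pos n α h y s).ne'

lemma dseq_mul_prod_Zseq (k : ℕ) (p : P) :
    dseq n α h y (k + 1) p * ∏ s ∈ Icc 1 k, Zseq n α h y s =
      dseq n α h y 1 p * ∏ s ∈ Icc 1 k, wfac n (α s) (h s) y p := by
  induction k with
  | zero => simp
  | succ k ih =>
    rw [prod_Icc_succ_top (by omega), prod_Icc_succ_top (by omega), ← mul_assoc _ _ (wfac ..),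
      ← ih, dseq_succ n α h y (by omega)]
    field_simp [(Zseq_pos n α h y (k + 1)).ne']

lemma Zseq_eq_roundNormalizer {s : ℕ} (hs : 1 ≤ s) :
    Zseq n α h y s = roundNormalizer (n - 1) (err n α h y s) (α s) := by
  have hw : ∀ q, wfac n (α s) (h s) y q =
      if h s q ≠ y q then exp (α s) else exp (-((n - 1) * α s)) := by
    intro q
    by_cases hq : h s q = y q <;> simp [wfac, hq, mul_comm]
  have hcorrect : ∑ q ∈ univ.filter (fun q => ¬ h s q ≠ y q), dseq n α h y s q =
      1 - err n α h y s := by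
    rw [err, ← sum_dseq n α h y hs,
      ← sum_filter_add_sum_filter_not univ (fun q => h s q ≠ y q)]
    ring
  simp only [Zseq, hw, mul_ite, sum_ite, ← sum_mul, hcorrect, err, roundNormalizer]
  ring

end WeightSequence

section Margin

variable [Fintype A] [DecidableEq A] (α : ℕ → ℝ) (h : ℕ → P → A)

lemma Psi_eq_sum (k : ℕ) (a : A) (p : P) :
    Psi α h k a p = ∑ s ∈ Icc 1 k, α s * (((Fintype.card A : ℝ) - 1) *
      (if h s p = a then 1 else 0) - (if h s p = a then 0 else 1)) := by
  have hwrong : ∑ a' ∈ univ.erase a, Fsc α h k a' p =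
      ∑ s ∈ Icc 1 k, α s * (if h s p = a then 0 else 1) := by
    simp only [Fsc]
    rw [sum_comm]
    refine sum_congr rfl fun s _ => ?_
    by_cases hs : h s p = a <;> simp [hs]
  rw [Psi, hwrong, Fsc, mul_sum, ← sum_sub_distrib]
  exact sum_congr rfl fun s _ => by ring

lemma prod_wfac_eq_exp_neg_Psi (y : P → A) (k : ℕ) (p : P) :
    ∏ s ∈ Icc 1 k, wfac (Fintype.card A) (α s) (h s) y p = exp (-Psi α h k (y p) p) := by
  rw [Psi_eq_sum, ← sum_neg_distrib, exp_sum]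
  rfl

variable [Fintype P] [Nonempty P] (y : P → A)

lemma sum_filter_Psi_nonpos_le_prod_Zseq (k : ℕ) :
    ∑ p ∈ univ.filter (fun p => Psi α h k (y p) p ≤ 0), dseq (Fintype.card A) α h y 1 p ≤
      ∏ s ∈ Icc 1 k, Zseq (Fintype.card A) α h y s := by
  set n := Fintype.card A
  calc ∑ p ∈ univ.filter (fun p => Psi α h k (y p) p ≤ 0), dseq n α h y 1 p
      ≤ ∑ p ∈ univ.filter (fun p => Psi α h k (y p) p ≤ 0),
          dseq n α h y 1 p * exp (-Psi α h k (y p) p) := by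
        refine sum_le_sum fun p hp => le_mul_of_one_le_right (dseq_pos n α h y 1 p).le ?_
        exact one_le_exp (neg_nonneg.2 (mem_filter.1 hp).2)
    _ ≤ ∑ p, dseq n α h y 1 p * exp (-Psi α h k (y p) p) :=
        sum_le_sum_of_subset_of_nonneg (filter_subset _ _) fun p _ _ =>
          (mul_pos (dseq_pos n α h y 1 p) (exp_pos _)).le
    _ = ∑ p, dseq n α h y (k + 1) p * ∏ s ∈ Icc 1 k, Zseq n α h y s := by
        simp only [dseq_mul_prod_Zseq, prod_wfac_eq_exp_neg_Psi, n]
    _ = ∏ s ∈ Icc 1 k, Zseq n α h y s := by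
        rw [← sum_mul, sum_dseq n α h y (by omega), one_mul]

end Margin

theorem stmt0_general [Fintype P] [Nonempty P] [Fintype A] [DecidableEq A]
    (hn : 2 ≤ Fintype.card A)
    (α : ℕ → ℝ) (h : ℕ → P → A) (y : P → A)
    (k : ℕ)
    (γ : ℝ) (hγ : γ ∈ Set.Ioo (0 : ℝ) (1 - 1 / (Fintype.card A : ℝ)))
    (hε : ∀ s ∈ Finset.Icc 1 k,
      0 < err (Fintype.card A) α h y s ∧
        err (Fintype.card A) α h y s ≤ 1 - 1 / (Fintype.card A : ℝ) - γ)
    (hα : ∀ s ∈ Finset.Icc 1 k,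
      α s = 1 / (2 * ((Fintype.card A : ℝ) - 1)) *
        Real.log (((Fintype.card A : ℝ) - 1) * (1 - err (Fintype.card A) α h y s) /
          err (Fintype.card A) α h y s)) :
    0 < -Real.log (phi (Fintype.card A) (1 - 1 / (Fintype.card A : ℝ) - γ)) ∧
      ∑ p ∈ Finset.univ.filter (fun p => Psi α h k (y p) p ≤ 0),
          dseq (Fintype.card A) α h y 1 p ≤
        Real.exp (-(-Real.log (phi (Fintype.card A) (1 - 1 / (Fintype.card A : ℝ) - γ)) * k)) := by
  set n := Fintype.card A
  set εb := 1 - 1 / (n : ℝ) - γ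
  have hm : (1 : ℝ) ≤ n - 1 := by
    have : (2 : ℝ) ≤ n := by exact_mod_cast hn
    linarith
  have hεb0 : 0 < εb := by linarith [hγ.2]
  have hεb : εb < (n - 1) / (n - 1 + 1) := by
    rw [sub_add_cancel, sub_div, div_self (by positivity)]
    linarith [hγ.1]
  have hεb1 : εb < 1 := hεb.trans ((div_lt_one (by linarith)).2 (by linarith))
  have hφ := phi_eq_roundNormalizer_sammeStep hn hεb0 hεb1
  have hφpos : 0 < phi n εb := hφ ▸ roundNormalizer_pos hεb0 hεb1
  have hφlt : phi n εb < 1 := hφ ▸ roundNormalizer_sammeStep_lt_one hm hεb0 hεb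
  refine ⟨neg_pos.2 (log_neg hφpos hφlt), ?_⟩
  have hZ : ∀ s ∈ Icc 1 k, Zseq n α h y s ≤ phi n εb := fun s hs => by
    rw [Zseq_eq_roundNormalizer n α h y (mem_Icc.1 hs).1, hα s hs, hφ]
    exact roundNormalizer_sammeStep_mono hm (hε s hs).1 (hε s hs).2 hεb
  calc ∑ p ∈ univ.filter (fun p => Psi α h k (y p) p ≤ 0), dseq n α h y 1 p
      ≤ ∏ s ∈ Icc 1 k, Zseq n α h y s := sum_filter_Psi_nonpos_le_prod_Zseq α h y k
    _ ≤ ∏ s ∈ Icc 1 k, phi n εb := prod_le_prod (fun s _ => (Zseq_pos n α h y s).le) hZ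
    _ = exp (-(-log (phi n εb) * k)) := by
      rw [prod_const, Nat.card_Icc, add_tsub_cancel_right, neg_mul, neg_neg, mul_comm,
        exp_nat_mul, exp_log hφpos]

/-- under the weak-learnability error bounds and the SAMME-type choice of
`α_s`, the exponential rate `ρ := −log φ(1−1/n−γ)` is positive and the `d_1`-mass of points
whose correct label has nonpositive score `Ψ^k` is at most `e^{−ρ k}`. -/
theorem stmt0 [Fintype P] [Nonempty P] [Fintype A] [DecidableEq A]
    (hn : 2 ≤ Fintype.card A)
    (α : ℕ → ℝ) (h : ℕ → P → A) (y : P → A)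
    (k : ℕ) (hk : 1 ≤ k)
    (γ : ℝ) (hγ : γ ∈ Set.Ioo (0 : ℝ) (1 - 1 / (Fintype.card A : ℝ)))
    (hε : ∀ s ∈ Finset.Icc 1 k,
      0 < err (Fintype.card A) α h y s ∧
        err (Fintype.card A) α h y s ≤ 1 - 1 / (Fintype.card A : ℝ) - γ)
    (hα : ∀ s ∈ Finset.Icc 1 k,
      α s = 1 / (2 * ((Fintype.card A : ℝ) - 1)) *
        Real.log (((Fintype.card A : ℝ) - 1) * (1 - err (Fintype.card A) α h y s) /
          err (Fintype.card A) α h y s)) :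
    0 < -Real.log (phi (Fintype.card A) (1 - 1 / (Fintype.card A : ℝ) - γ)) ∧
      ∑ p ∈ Finset.univ.filter (fun p => Psi α h k (y p) p ≤ 0),
          dseq (Fintype.card A) α h y 1 p ≤
        Real.exp (-(-Real.log (phi (Fintype.card A) (1 - 1 / (Fintype.card A : ℝ) - γ)) * k)) :=
  stmt0_general hn α h y k γ hγ hε hα

end
end

section
/- For every k ≥ 1, the d_1-mass of points whose correct label has nonpositive score is bounded by the product of the normalizers: Σ_{p ∈ P : Ψ^k_{y(p)}(p) ≤ 0} d_1(p) ≤ Π_{s=1}^k Z_s. -/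
open Finset

noncomputable section

variable {P A : Type*}

/-- Auxiliary: `S_k(p) = d_1(p)·∏_{s=1}^k wfac_s(p)`. -/
def Sfun [Fintype P] [DecidableEq A] (n : ℕ) (α : ℕ → ℝ) (h : ℕ → P → A) (y : P → A)
    (k : ℕ) (p : P) : ℝ :=
  (1 / (Fintype.card P : ℝ)) * ∏ s ∈ Finset.Icc 1 k, wfac n (α s) (h s) y p

lemma Sfun_pos [Fintype P] [Nonempty P] [DecidableEq A] (n : ℕ) (α : ℕ → ℝ)
    (h : ℕ → P → A) (y : P → A) (k : ℕ) (p : P) : 0 < Sfun n α h y k p := by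
  apply mul_pos
  · have : (0 : ℝ) < (Fintype.card P : ℝ) := by
      exact_mod_cast Fintype.card_pos
    positivity
  · exact Finset.prod_pos fun s _ => Real.exp_pos _

lemma Ssum_pos [Fintype P] [Nonempty P] [DecidableEq A] (n : ℕ) (α : ℕ → ℝ)
    (h : ℕ → P → A) (y : P → A) (k : ℕ) : 0 < ∑ q, Sfun n α h y k q :=
  Finset.sum_pos (fun q _ => Sfun_pos n α h y k q) Finset.univ_nonempty

lemma key [Fintype P] [Nonempty P] [DecidableEq A] (n : ℕ) (α : ℕ → ℝ)
    (h : ℕ → P → A) (y : P → A) (k : ℕ) :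
    (∀ p, dseq n α h y (k + 1) p = Sfun n α h y k p / ∑ q, Sfun n α h y k q) ∧
      ∏ s ∈ Finset.Icc 1 k, Zseq n α h y s = ∑ q, Sfun n α h y k q := by
  induction k with
  | zero =>
      have hc : (Fintype.card P : ℝ) ≠ 0 := by
        exact_mod_cast Fintype.card_ne_zero
      constructor
      · intro p
        simp [dseq, Sfun, Finset.sum_const, nsmul_eq_mul, hc]
      · simp [Sfun, Finset.sum_const, nsmul_eq_mul, hc]
  | succ k ih =>
      obtain ⟨ihd, ihz⟩ := ih
      set T := ∑ q, Sfun n α h y k q with hT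
      have hTpos := Ssum_pos n α h y k
      have hTne : T ≠ 0 := ne_of_gt hTpos
      have hS : ∀ p, Sfun n α h y (k + 1) p =
          Sfun n α h y k p * wfac n (α (k + 1)) (h (k + 1)) y p := by
        intro p
        unfold Sfun
        rw [Finset.prod_Icc_succ_top (Nat.le_add_left 1 k)]
        ring
      have hZ : Zseq n α h y (k + 1) = (∑ q, Sfun n α h y (k + 1) q) / T := by
        unfold Zseq
        rw [Finset.sum_div]
        refine Finset.sum_congr rfl fun q _ => ?_
        rw [ihd q, hS q]
        ring
      have hT1pos := Ssum_pos n α h y (k + 1)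
      constructor
      · intro p
        show dseq n α h y (k + 2) p = _
        rw [dseq]
        have hden : (∑ q, dseq n α h y (k + 1) q * wfac n (α (k + 1)) (h (k + 1)) y q) =
            (∑ q, Sfun n α h y (k + 1) q) / T := by
          rw [Finset.sum_div]
          refine Finset.sum_congr rfl fun q _ => ?_
          rw [ihd q, hS q]; ring
        beta_reduce
        rw [hden, ihd p, hS p]
        field_simp
      · rw [Finset.prod_Icc_succ_top (Nat.le_add_left 1 k), ihz, hZ]
        field_simp

lemma prod_wfac_eq [Fintype P] [Fintype A] [DecidableEq A] (α : ℕ → ℝ)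
    (h : ℕ → P → A) (y : P → A) (k : ℕ) (p : P) :
    ∏ s ∈ Finset.Icc 1 k, wfac (Fintype.card A) (α s) (h s) y p =
      Real.exp (-(Psi α h k (y p) p)) := by
  unfold wfac
  rw [← Real.exp_sum]
  congr 1
  rw [Psi]
  have hF : ∑ a' ∈ Finset.univ.erase (y p), Fsc α h k a' p =
      ∑ s ∈ Finset.Icc 1 k, α s * (if h s p = y p then 0 else 1) := by
    unfold Fsc
    rw [Finset.sum_comm]
    refine Finset.sum_congr rfl fun s _ => ?_
    rw [← Finset.mul_sum]
    congr 1
    by_cases hsy : h s p = y p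
    · rw [if_pos hsy]
      apply Finset.sum_eq_zero
      intro a' ha'
      rw [if_neg]
      intro hcon
      exact (Finset.mem_erase.mp ha').1 (hcon.symm.trans hsy)
    · rw [if_neg hsy]
      rw [Finset.sum_ite_eq (Finset.univ.erase (y p)) (h s p) (fun _ => (1:ℝ))]
      rw [if_pos (Finset.mem_erase.mpr ⟨hsy, Finset.mem_univ _⟩)]
  rw [hF]
  unfold Fsc
  rw [Finset.mul_sum, ← Finset.sum_sub_distrib, ← Finset.sum_neg_distrib]
  refine Finset.sum_congr rfl fun s _ => ?_
  ring

/-- for every `k ≥ 1`, the `d_1`-mass of points whose correct label has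
nonpositive score is bounded by the product of the normalizers:
`Σ_{p : Ψ^k_{y(p)}(p) ≤ 0} d_1(p) ≤ Π_{s=1}^k Z_s`. -/
theorem stmt3 [Fintype P] [Nonempty P] [Fintype A] [DecidableEq A]
    (hn : 2 ≤ Fintype.card A)
    (α : ℕ → ℝ) (h : ℕ → P → A) (y : P → A)
    (k : ℕ) (hk : 1 ≤ k) :
    ∑ p ∈ Finset.univ.filter (fun p => Psi α h k (y p) p ≤ 0),
        dseq (Fintype.card A) α h y 1 p ≤
      ∏ s ∈ Finset.Icc 1 k, Zseq (Fintype.card A) α h y s := by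
  obtain ⟨-, hz⟩ := key (Fintype.card A) α h y k
  rw [hz]
  calc ∑ p ∈ Finset.univ.filter (fun p => Psi α h k (y p) p ≤ 0),
        dseq (Fintype.card A) α h y 1 p
      ≤ ∑ p ∈ Finset.univ.filter (fun p => Psi α h k (y p) p ≤ 0),
          Sfun (Fintype.card A) α h y k p := by
        refine Finset.sum_le_sum fun p hp => ?_
        have hpsi : Psi α h k (y p) p ≤ 0 := (Finset.mem_filter.mp hp).2
        have h1 : dseq (Fintype.card A) α h y 1 p = 1 / (Fintype.card P : ℝ) := by
          rw [dseq]
        rw [h1]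
        unfold Sfun
        rw [prod_wfac_eq]
        have hexp : (1 : ℝ) ≤ Real.exp (-(Psi α h k (y p) p)) := by
          rw [← Real.exp_zero]
          exact Real.exp_le_exp.mpr (by linarith)
        have hc : (0 : ℝ) < 1 / (Fintype.card P : ℝ) := by
          have : (0 : ℝ) < (Fintype.card P : ℝ) := by exact_mod_cast Fintype.card_pos
          positivity
        nlinarith
    _ ≤ ∑ p, Sfun (Fintype.card A) α h y k p := by
        refine Finset.sum_le_sum_of_subset_of_nonneg (Finset.filter_subset _ _)
          fun p _ _ => (Sfun_pos _ α h y k p).le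

end
end

section
/- For every integer n ≥ 2, φ is differentiable at 1 − 1/n with derivative φ'(1 − 1/n) = 0. -/
open Real

theorem hasDerivAt_const_mul_rpow_mul_one_sub_rpow {x : ℝ} (hx₀ : 0 < x) (hx₁ : x < 1)
    (C p q : ℝ) :
    HasDerivAt (fun ε => C * ε ^ p * (1 - ε) ^ q)
      (C * x ^ p * (1 - x) ^ q * (p / x - q / (1 - x))) x := by
  have hx₁' : 1 - x ≠ 0 := (sub_pos.2 hx₁).ne'
  refine (((hasDerivAt_rpow_const (p := p) (Or.inl hx₀.ne')).const_mul C).mul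
    (((hasDerivAt_id' x).const_sub 1).rpow_const (p := q) (Or.inl hx₁'))).congr_deriv ?_
  rw [rpow_sub_one hx₀.ne', rpow_sub_one hx₁']
  field_simp
  ring

theorem hasDerivAt_const_mul_rpow_mul_one_sub_rpow_of_one_sub_eq_div {a x : ℝ} (ha : 0 < a)
    (hx : 0 < x) (hax : 1 - x = x / a) (C p q : ℝ) :
    HasDerivAt (fun ε => C * ε ^ p * (1 - ε) ^ q)
      (C * a ^ (-q) * x ^ (p + q) * (p - q * a) / x) x := by
  have hx₁ : x < 1 := sub_pos.1 (hax ▸ div_pos hx ha)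
  refine (hasDerivAt_const_mul_rpow_mul_one_sub_rpow hx hx₁ C p q).congr_deriv ?_
  rw [hax, div_rpow hx.le ha.le, rpow_add hx, rpow_neg ha.le]
  field_simp

/-- `φ` is differentiable at `1 − 1/n` with derivative `0` there. -/
theorem stmt6 (n : ℕ) (hn : 2 ≤ n) : HasDerivAt (phi n) 0 (1 - 1 / (n : ℝ)) := by
  set a : ℝ := n - 1 with ha_def
  set b : ℝ := 1 / (2 * a) with hb_def
  set x : ℝ := 1 - 1 / (n : ℝ)
  have ha : 0 < a := by rw [ha_def, sub_pos, Nat.one_lt_cast]; omega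
  have hn' : (n : ℝ) = a + 1 := by ring
  have hx₀ : 0 < x := sub_pos.2 <| (div_lt_one (by positivity)).2 (by linarith)
  have hx : 1 - x = x / a := by
    simp only [x, hn']
    field_simp
    ring
  have hphi : phi n = fun ε =>
      a ^ (-(1 / 2) : ℝ) * ε ^ ((1 : ℝ) / 2) * (1 - ε) ^ ((1 : ℝ) / 2) + a ^ b * ε ^ (1 - b) * (1 - ε) ^ b := by
    funext ε; simp only [phi]; ring
  rw [hphi]
  refine ((hasDerivAt_const_mul_rpow_mul_one_sub_rpow_of_one_sub_eq_div ha hx₀ hx _ _ _).add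
    (hasDerivAt_const_mul_rpow_mul_one_sub_rpow_of_one_sub_eq_div ha hx₀ hx _ _ _)).congr_deriv ?_
  rw [← rpow_add ha, ← rpow_add ha, add_neg_cancel, rpow_zero, sub_add_cancel, rpow_one,
    show -(1 / 2) + -(1 / 2) = (-1 : ℝ) by norm_num, rpow_neg_one, add_halves, rpow_one, hb_def]
  field_simp
  ring
end

section
/- For every integer n ≥ 2, φ is strictly concave on the interval [0,1]. -/
/-!
Each summand of `φ` is a positive multiple of `x ↦ x ^ p * (1 - x) ^ q` with `0 < p, q ≤ 1`
(namely `p = q = 1/2`, and `p = 1 - a`, `q = a` with `a = 1/(2(n-1)) ≤ 1/2`). Differentiating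
twice on `(0, 1)` gives
`p (p - 1) x^(p-2) (1-x)^q - 2 p q x^(p-1) (1-x)^(q-1) + q (q - 1) x^p (1-x)^(q-2) < 0`,
so each summand is strictly concave on `[0, 1]`, and so is their sum.
-/

noncomputable section

open Real Set

theorem StrictConcaveOn.const_mul {E : Type*} [AddCommMonoid E] [Module ℝ E] {s : Set E}
    {f : E → ℝ} (hf : StrictConcaveOn ℝ s f) {c : ℝ} (hc : 0 < c) :
    StrictConcaveOn ℝ s fun x => c * f x := by
  refine ⟨hf.1, fun x hx y hy hxy a b ha hb hab => ?_⟩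
  have h := mul_lt_mul_of_pos_left (hf.2 hx hy hxy ha hb hab) hc
  simp only [smul_eq_mul] at h ⊢
  linarith

theorem hasDerivAt_rpow_mul_one_sub_rpow (p q : ℝ) {x : ℝ} (hx : x ∈ Ioo (0 : ℝ) 1) :
    HasDerivAt (fun y => y ^ p * (1 - y) ^ q)
      (p * (x ^ (p - 1) * (1 - x) ^ q) - q * (x ^ p * (1 - x) ^ (q - 1))) x := by
  have h₁ : HasDerivAt (fun y : ℝ => y ^ p) (1 * p * x ^ (p - 1)) x :=
    (hasDerivAt_id x).rpow_const (Or.inl hx.1.ne')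
  have h₂ : HasDerivAt (fun y : ℝ => (1 - y) ^ q) ((0 - 1) * q * (1 - x) ^ (q - 1)) x :=
    ((hasDerivAt_const x 1).sub (hasDerivAt_id x)).rpow_const (Or.inl (sub_pos.2 hx.2).ne')
  exact (h₁.mul h₂).congr_deriv (by ring)

theorem strictConcaveOn_rpow_mul_one_sub_rpow {p q : ℝ} (hp₀ : 0 < p) (hp₁ : p ≤ 1)
    (hq₀ : 0 < q) (hq₁ : q ≤ 1) :
    StrictConcaveOn ℝ (Icc 0 1) fun x : ℝ => x ^ p * (1 - x) ^ q := by
  set f' : ℝ → ℝ := fun x => p * (x ^ (p - 1) * (1 - x) ^ q) - q * (x ^ p * (1 - x) ^ (q - 1))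
  set f'' : ℝ → ℝ := fun x =>
    p * ((p - 1) * (x ^ (p - 1 - 1) * (1 - x) ^ q) - q * (x ^ (p - 1) * (1 - x) ^ (q - 1))) -
      q * (p * (x ^ (p - 1) * (1 - x) ^ (q - 1)) - (q - 1) * (x ^ p * (1 - x) ^ (q - 1 - 1)))
  have hf'' : ∀ x ∈ Ioo (0 : ℝ) 1, HasDerivAt f' (f'' x) x := fun x hx =>
    ((hasDerivAt_rpow_mul_one_sub_rpow (p - 1) q hx).const_mul p).sub
      ((hasDerivAt_rpow_mul_one_sub_rpow p (q - 1) hx).const_mul q)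
  have hcont : ContinuousOn (fun x : ℝ => x ^ p * (1 - x) ^ q) (Icc 0 1) :=
    (continuousOn_id.rpow_const fun _ _ => Or.inr hp₀.le).mul
      ((continuousOn_const.sub continuousOn_id).rpow_const fun _ _ => Or.inr hq₀.le)
  refine strictConcaveOn_of_deriv2_neg (convex_Icc 0 1) hcont fun x hx => ?_
  rw [interior_Icc] at hx
  obtain ⟨hx₀, hx₁⟩ := hx
  have hderiv : deriv (fun x : ℝ => x ^ p * (1 - x) ^ q) =ᶠ[nhds x] f' := by
    filter_upwards [Ioo_mem_nhds hx₀ hx₁] with y hy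
    exact (hasDerivAt_rpow_mul_one_sub_rpow p q hy).deriv
  rw [Function.iterate_succ_apply, Function.iterate_one, hderiv.deriv_eq,
    (hf'' x ⟨hx₀, hx₁⟩).deriv]
  have hx' : 0 < 1 - x := sub_pos.2 hx₁
  have hA : p * (p - 1) * (x ^ (p - 1 - 1) * (1 - x) ^ q) ≤ 0 :=
    mul_nonpos_of_nonpos_of_nonneg (mul_nonpos_of_nonneg_of_nonpos hp₀.le (by linarith))
      (by positivity)
  have hB : 0 < p * q * (x ^ (p - 1) * (1 - x) ^ (q - 1)) := by positivity
  have hC : q * (q - 1) * (x ^ p * (1 - x) ^ (q - 1 - 1)) ≤ 0 :=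
    mul_nonpos_of_nonpos_of_nonneg (mul_nonpos_of_nonneg_of_nonpos hq₀.le (by linarith))
      (by positivity)
  simp only [f'']
  linarith

/-- `φ` is strictly concave on `[0,1]`. -/
theorem stmt7 (n : ℕ) (hn : 2 ≤ n) : StrictConcaveOn ℝ (Set.Icc (0 : ℝ) 1) (phi n) := by
  have hn' : (2 : ℝ) ≤ n := by exact_mod_cast hn
  have hn₁ : (0 : ℝ) < n - 1 := by linarith
  set a : ℝ := 1 / (2 * ((n : ℝ) - 1)) with ha
  have ha₀ : 0 < a := by positivity
  have ha₁ : a ≤ 1 / 2 := by rw [ha]; gcongr; linarith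
  have hphi : phi n = fun ε => ((n : ℝ) - 1) ^ (-(1 / 2) : ℝ) * (ε ^ (1 / 2 : ℝ) *
      (1 - ε) ^ (1 / 2 : ℝ)) + ((n : ℝ) - 1) ^ a * (ε ^ (1 - a) * (1 - ε) ^ a) := by
    funext ε
    simp only [phi, ← ha]
    ring
  rw [hphi]
  exact ((strictConcaveOn_rpow_mul_one_sub_rpow (by norm_num) (by norm_num) (by norm_num)
    (by norm_num)).const_mul (rpow_pos_of_pos hn₁ _)).add
    ((strictConcaveOn_rpow_mul_one_sub_rpow (by linarith) (by linarith) ha₀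
    (by linarith)).const_mul (rpow_pos_of_pos hn₁ _))

end
end

section
/- For every integer n ≥ 2, φ is strictly monotone increasing on the interval [0, 1 − 1/n], and φ(ε) < 1 for every ε ∈ [0, 1 − 1/n). -/
noncomputable section

set_option maxHeartbeats 1000000

def Dval (n : ℕ) (x : ℝ) : ℝ :=
  (((n : ℝ) - 1) ^ (-(1 / 2) : ℝ) * ((1 : ℝ) / 2 * x ^ ((1 : ℝ) / 2 - 1)) * (1 - x) ^ ((1 : ℝ) / 2) +
    ((n : ℝ) - 1) ^ (-(1 / 2) : ℝ) * x ^ ((1 : ℝ) / 2) * ((1 : ℝ) / 2 * (1 - x) ^ ((1 : ℝ) / 2 - 1) * (-1))) +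
  (((n : ℝ) - 1) ^ (1 / (2 * ((n : ℝ) - 1))) * (1 / (2 * ((n : ℝ) - 1)) * (1 - x) ^ (1 / (2 * ((n : ℝ) - 1)) - 1) * (-1)) * x ^ (1 - 1 / (2 * ((n : ℝ) - 1))) +
    ((n : ℝ) - 1) ^ (1 / (2 * ((n : ℝ) - 1))) * (1 - x) ^ (1 / (2 * ((n : ℝ) - 1))) *
      ((1 - 1 / (2 * ((n : ℝ) - 1))) * x ^ (1 - 1 / (2 * ((n : ℝ) - 1)) - 1)))

lemma phi_hasDerivAt (n : ℕ) {x : ℝ} (h0 : 0 < x) (h1 : x < 1) :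
    HasDerivAt (phi n) (Dval n x) x := by
  have h1x : (0:ℝ) < 1 - x := by linarith
  have hone : HasDerivAt (fun y : ℝ => 1 - y) (-1) x := (hasDerivAt_id x).const_sub 1
  have hq : HasDerivAt (fun y : ℝ => y ^ ((1:ℝ)/2)) ((1:ℝ)/2 * x ^ ((1:ℝ)/2 - 1)) x :=
    Real.hasDerivAt_rpow_const (Or.inl h0.ne')
  have hq2 : HasDerivAt (fun y : ℝ => (1 - y) ^ ((1:ℝ)/2))
      ((1:ℝ)/2 * (1 - x) ^ ((1:ℝ)/2 - 1) * (-1)) x :=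
    (Real.hasDerivAt_rpow_const (x := 1 - x) (p := (1:ℝ)/2) (Or.inl h1x.ne')).comp x hone
  set a : ℝ := 1 / (2 * ((n : ℝ) - 1)) with hadef
  have hA : HasDerivAt (fun y : ℝ => (1 - y) ^ a) (a * (1 - x) ^ (a - 1) * (-1)) x :=
    (Real.hasDerivAt_rpow_const (x := 1 - x) (p := a) (Or.inl h1x.ne')).comp x hone
  have hB : HasDerivAt (fun y : ℝ => y ^ (1 - a)) ((1 - a) * x ^ (1 - a - 1)) x :=
    Real.hasDerivAt_rpow_const (Or.inl h0.ne')
  have ht1 := ((hq.const_mul (((n : ℝ) - 1) ^ (-(1 / 2) : ℝ))).mul hq2)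
  have ht2 := ((hA.const_mul (((n : ℝ) - 1) ^ a)).mul hB)
  have := ht1.add ht2
  exact this

private lemma mul_strictConcaveOn' {K : ℝ} (hK : 0 < K) {f : ℝ → ℝ}
    (h : StrictConcaveOn ℝ (Set.Ici 0) f) :
    StrictConcaveOn ℝ (Set.Ici 0) (fun u => K * f u) := by
  refine ⟨h.1, fun x hx y hy hxy p q hp hq hpq => ?_⟩
  have := h.2 hx hy hxy hp hq hpq
  simp only [smul_eq_mul] at this ⊢
  nlinarith

private lemma g_pos {m a : ℝ} (hm : 1 < m) (ha : a = 1 / (2 * m)) {u : ℝ}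
    (hu0 : 0 < u) (hum : u < m) :
    0 < (1 - u) / 2 + m ^ (a + 1 / 2 : ℝ) *
      ((1 - a) * u ^ ((1 : ℝ) / 2 - a) - a * u ^ ((1 : ℝ) / 2 - a + 1)) := by
  have hm0 : (0:ℝ) < m := by linarith
  have ha0 : 0 < a := by rw [ha]; positivity
  have ha2 : a < 1 / 2 := by
    rw [ha, div_lt_div_iff₀ (by linarith) (by norm_num)]; linarith
  set β : ℝ := (1 : ℝ) / 2 - a with hβdef
  have hβ0 : 0 < β := by simp only [hβdef]; linarith
  have hβ1 : β < 1 := by simp only [hβdef]; linarith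
  set K : ℝ := m ^ (a + 1 / 2 : ℝ) with hKdef
  have hK0 : 0 < K := Real.rpow_pos_of_pos hm0 _
  set G : ℝ → ℝ := fun u => (1 - u) / 2 + K * ((1 - a) * u ^ β - a * u ^ (β + 1)) with hG
  have hconc : StrictConcaveOn ℝ (Set.Ici 0) G := by
    have h1 : StrictConcaveOn ℝ (Set.Ici 0) (fun u : ℝ => (K * (1 - a)) * u ^ β) :=
      mul_strictConcaveOn' (by nlinarith) (Real.strictConcaveOn_rpow hβ0 hβ1)
    have h2 : ConcaveOn ℝ (Set.Ici 0) (fun u : ℝ => (1 - u) / 2 - (K * a) * u ^ (β + 1)) := by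
      have hcvx : ConvexOn ℝ (Set.Ici 0) (fun u : ℝ => (K * a) • u ^ (β + 1)) :=
        ((strictConvexOn_rpow (by linarith : (1:ℝ) < β + 1)).convexOn).smul
          (by positivity)
      have hlin : ConcaveOn ℝ (Set.Ici 0) (fun u : ℝ => (1 - u) / 2) := by
        refine ⟨convex_Ici 0, fun x _ y _ p q hp hq hpq => le_of_eq ?_⟩
        simp only [smul_eq_mul]
        linear_combination hpq / 2
      have h3 := hlin.add hcvx.neg
      have : (fun u : ℝ => (1 - u) / 2 - (K * a) * u ^ (β + 1)) =
          (fun u : ℝ => (1 - u) / 2) + fun u : ℝ => -((K * a) • u ^ (β + 1)) := by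
        funext u; simp [smul_eq_mul]; ring
      rw [this]; exact h3
    have h4 := h1.add_concaveOn h2
    have : G = (fun u : ℝ => (K * (1 - a)) * u ^ β) +
        fun u : ℝ => (1 - u) / 2 - (K * a) * u ^ (β + 1) := by
      funext u; simp only [hG, Pi.add_apply]; ring
    rw [this]; exact h4
  have hmem0 : (0:ℝ) ∈ Set.Ici (0:ℝ) := Set.mem_Ici.mpr le_rfl
  have hmemm : m ∈ Set.Ici (0:ℝ) := hm0.le
  have ht : 0 < 1 - u / m := by
    rw [sub_pos, div_lt_one hm0]; exact hum
  have hs : 0 < u / m := by positivity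
  have hsum : (1 - u / m) + u / m = 1 := by ring
  have hkey := hconc.2 hmem0 hmemm hm0.ne ht hs hsum
  simp only [smul_eq_mul, mul_zero, zero_add] at hkey
  have hG0 : G 0 = 1 / 2 := by
    simp [hG, Real.zero_rpow hβ0.ne', Real.zero_rpow (by linarith : β + 1 ≠ 0)]
  have hGm : G m = 0 := by
    have e1 : K * m ^ β = m := by
      rw [hKdef, ← Real.rpow_add hm0]
      rw [show a + 1 / 2 + β = 1 by simp [hβdef]; ring]
      exact Real.rpow_one m
    have e2 : K * m ^ (β + 1) = m * m := by
      rw [hKdef, ← Real.rpow_add hm0]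
      rw [show a + 1 / 2 + (β + 1) = ((2:ℕ):ℝ) by push_cast; simp [hβdef]; ring]
      rw [Real.rpow_natCast]
      ring
    have ham : a * m = 1 / 2 := by rw [ha]; field_simp
    simp only [hG]
    nlinarith [e1, e2, ham]
  have hum' : (u / m) * m = u := by field_simp
  rw [hG0, hGm, hum'] at hkey
  calc (0:ℝ) < (1 - u / m) * (1 / 2) + u / m * 0 := by nlinarith
    _ < G u := hkey

lemma Dval_pos (n : ℕ) (hn : 2 ≤ n) {x : ℝ} (h0 : 0 < x) (hx : x < 1 - 1 / (n:ℝ)) :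
    0 < Dval n x := by
  have hn2 : (2:ℝ) ≤ (n:ℝ) := by exact_mod_cast hn
  have hn0 : (0:ℝ) < (n:ℝ) := by linarith
  have hx1 : x < 1 := by
    have h1n : 0 < 1 / (n:ℝ) := by positivity
    linarith
  have h1x : (0:ℝ) < 1 - x := by linarith
  simp only [Dval]
  set m : ℝ := (n:ℝ) - 1 with hmdef
  have hm0 : (0:ℝ) < m := by simp only [hmdef]; linarith
  have hm1 : (1:ℝ) ≤ m := by simp only [hmdef]; linarith
  set a : ℝ := 1 / (2 * m) with hadef
  have ha0 : 0 < a := by rw [hadef]; positivity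
  have ha2 : a ≤ 1/2 := by
    rw [hadef, div_le_div_iff₀ (by linarith) (by norm_num)]; linarith
  set c : ℝ := m ^ (-(1 / 2) : ℝ) with hcdef
  set d : ℝ := m ^ a with hddef
  have hc0 : 0 < c := Real.rpow_pos_of_pos hm0 _
  have hd0 : 0 < d := Real.rpow_pos_of_pos hm0 _
  set P : ℝ := x ^ ((1:ℝ)/2 - 1) with hP
  set Q : ℝ := x ^ ((1:ℝ)/2 - a) with hQ
  set R : ℝ := (1-x) ^ ((1:ℝ)/2 - a) with hR
  set S : ℝ := (1-x) ^ (a - 1) with hS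
  have hP0 : 0 < P := Real.rpow_pos_of_pos h0 _
  have hQ0 : 0 < Q := Real.rpow_pos_of_pos h0 _
  have hR0 : 0 < R := Real.rpow_pos_of_pos h1x _
  have hS0 : 0 < S := Real.rpow_pos_of_pos h1x _
  have r1 : P * x = x ^ ((1:ℝ)/2) := by
    rw [hP, ← Real.rpow_add_one h0.ne']; norm_num
  have r2 : P * x * Q = x ^ (1 - a) := by
    rw [hP, hQ, ← Real.rpow_add_one h0.ne', ← Real.rpow_add h0,
      show (1:ℝ)/2 - 1 + 1 + ((1:ℝ)/2 - a) = 1 - a by ring]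
  have r3 : P * Q = x ^ (1 - a - 1) := by
    rw [hP, hQ, ← Real.rpow_add h0,
      show (1:ℝ)/2 - 1 + ((1:ℝ)/2 - a) = 1 - a - 1 by ring]
  have r4 : S * R * (1-x) = (1-x) ^ ((1:ℝ)/2) := by
    rw [hS, hR, ← Real.rpow_add h1x, ← Real.rpow_add_one h1x.ne',
      show a - 1 + ((1:ℝ)/2 - a) + 1 = (1:ℝ)/2 by ring]
  have r5 : S * R = (1-x) ^ ((1:ℝ)/2 - 1) := by
    rw [hS, hR, ← Real.rpow_add h1x,
      show a - 1 + ((1:ℝ)/2 - a) = (1:ℝ)/2 - 1 by ring]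
  have r6 : S * (1-x) = (1-x) ^ a := by
    rw [hS, ← Real.rpow_add_one h1x.ne', show a - 1 + 1 = a by ring]
  rw [← r1, ← r2, ← r3, ← r4, ← r5, ← r6]
  have hE : 0 < c/2 * R * (1 - 2*x) + d * Q * (1 - a - x) := by
    rcases eq_or_lt_of_le hm1 with hm|hm
    · -- n = 2
      have hneq : (n:ℝ) = 2 := by simp only [hmdef] at hm; linarith
      have ha' : a = 1/2 := by rw [hadef, ← hm]; norm_num
      have hx2 : x < 1/2 := by rw [hneq] at hx; norm_num at hx; linarith
      have hQ1 : Q = 1 := by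
        rw [hQ, show (1:ℝ)/2 - a = 0 by rw [ha']; ring, Real.rpow_zero]
      have hR1 : R = 1 := by
        rw [hR, show (1:ℝ)/2 - a = 0 by rw [ha']; ring, Real.rpow_zero]
      have hc1 : c = 1 := by rw [hcdef, ← hm, Real.one_rpow]
      have hd1 : d = 1 := by rw [hddef, ← hm, Real.one_rpow]
      rw [hQ1, hR1, hc1, hd1, ha']
      nlinarith
    · -- n ≥ 3
      set u : ℝ := x / (1-x) with hu
      have hu0 : 0 < u := div_pos h0 h1x
      have hxn : x * (n:ℝ) < (n:ℝ) - 1 := by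
        have h' : (1 - 1/(n:ℝ)) * (n:ℝ) = (n:ℝ) - 1 := by field_simp
        nlinarith
      have hum : u < m := by
        rw [hu, div_lt_iff₀ h1x]
        simp only [hmdef]
        nlinarith
      have hxu : x = (1-x) * u := by rw [hu]; field_simp
      have hQR : Q = R * u ^ ((1:ℝ)/2 - a) := by
        rw [hQ, hR, ← Real.mul_rpow h1x.le hu0.le, ← hxu]
      have hdK : d = c * m ^ (a + 1/2 : ℝ) := by
        rw [hddef, hcdef, ← Real.rpow_add hm0, show -(1/2 : ℝ) + (a + 1/2) = a by ring]
      have hg := g_pos hm hadef hu0 hum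
      have huu : u ^ ((1:ℝ)/2 - a + 1) = u ^ ((1:ℝ)/2 - a) * u :=
        Real.rpow_add_one hu0.ne' _
      have hEeq : c/2 * R * (1 - 2*x) + d * Q * (1 - a - x)
          = c * R * (1-x) * ((1 - u) / 2 + m ^ (a + 1/2 : ℝ) *
            ((1 - a) * u ^ ((1:ℝ)/2 - a) - a * u ^ ((1:ℝ)/2 - a + 1))) := by
        rw [hQR, hdK, huu]
        linear_combination (-(c/2*R) - c * m ^ (a + 1/2 : ℝ) * R * u ^ ((1:ℝ)/2 - a) * a) * hxu
      rw [hEeq]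
      exact mul_pos (mul_pos (mul_pos hc0 hR0) h1x) hg
  calc (0:ℝ) < P * S * (c/2 * R * (1 - 2*x) + d * Q * (1 - a - x)) :=
        mul_pos (mul_pos hP0 hS0) hE
    _ = c * (1/2 * P) * (S * R * (1-x)) + c * (P * x) * (1/2 * (S * R) * (-1)) +
        (d * (a * S * (-1)) * (P * x * Q) + d * (S * (1-x)) * ((1 - a) * (P * Q))) := by ring

lemma phi_endpoint (n : ℕ) (hn : 2 ≤ n) : phi n (1 - 1/(n:ℝ)) = 1 := by
  have hn2 : (2:ℝ) ≤ (n:ℝ) := by exact_mod_cast hn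
  have hn0 : (0:ℝ) < (n:ℝ) := by linarith
  have hm0 : (0:ℝ) < (n:ℝ) - 1 := by linarith
  have ht0 : (0:ℝ) < 1/(n:ℝ) := by positivity
  rw [phi]
  rw [show (1:ℝ) - (1 - 1/(n:ℝ)) = 1/(n:ℝ) by ring]
  rw [show (1:ℝ) - 1/(n:ℝ) = ((n:ℝ) - 1) * (1/(n:ℝ)) by field_simp]
  set m : ℝ := (n:ℝ) - 1 with hm
  set a : ℝ := 1 / (2*m) with ha
  set t : ℝ := 1/(n:ℝ) with htd
  rw [Real.mul_rpow hm0.le ht0.le, Real.mul_rpow hm0.le ht0.le]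
  have A : m ^ (-(1/2) : ℝ) * m ^ ((1:ℝ)/2) = 1 := by
    rw [← Real.rpow_add hm0]; norm_num
  have B : t ^ ((1:ℝ)/2) * t ^ ((1:ℝ)/2) = t := by
    rw [← Real.rpow_add ht0]; norm_num
  have C : m ^ a * m ^ (1 - a) = m := by
    rw [← Real.rpow_add hm0, show a + (1-a) = 1 by ring, Real.rpow_one]
  have D : t ^ a * t ^ (1 - a) = t := by
    rw [← Real.rpow_add ht0, show a + (1-a) = 1 by ring, Real.rpow_one]
  have hnt : (n:ℝ) * t = 1 := by rw [htd]; field_simp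
  linear_combination (t ^ ((1:ℝ)/2) * t ^ ((1:ℝ)/2)) * A + B + (t ^ a * t ^ (1-a)) * C +
    m * D + t * hm + hnt

lemma phi_continuous (n : ℕ) (hn : 2 ≤ n) : Continuous (phi n) := by
  have hn2 : (2:ℝ) ≤ (n:ℝ) := by exact_mod_cast hn
  have hm0 : (0:ℝ) < (n:ℝ) - 1 := by linarith
  have ha0 : (0:ℝ) ≤ 1/(2*((n:ℝ)-1)) := by positivity
  have ha1 : (0:ℝ) ≤ 1 - 1/(2*((n:ℝ)-1)) := by
    have h2 : (2:ℝ) ≤ 2*((n:ℝ)-1) := by linarith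
    have := one_div_le_one_div_of_le (by norm_num : (0:ℝ) < 2) h2
    linarith
  unfold phi
  have c1 : Continuous fun y:ℝ => y ^ ((1:ℝ)/2) := Real.continuous_rpow_const (by norm_num)
  have c2 : Continuous fun y:ℝ => (1-y) ^ ((1:ℝ)/2) :=
    (Real.continuous_rpow_const (by norm_num)).comp (continuous_const.sub continuous_id)
  have c3 : Continuous fun y:ℝ => (1-y) ^ (1/(2*((n:ℝ)-1))) :=
    (Real.continuous_rpow_const ha0).comp (continuous_const.sub continuous_id)
  have c4 : Continuous fun y:ℝ => y ^ (1 - 1/(2*((n:ℝ)-1))) := Real.continuous_rpow_const ha1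
  exact ((continuous_const.mul c1).mul c2).add ((continuous_const.mul c3).mul c4)

/-- `φ` is strictly monotone increasing on `[0, 1 − 1/n]`, and `φ(ε) < 1`
for every `ε ∈ [0, 1 − 1/n)`. -/
theorem stmt8 (n : ℕ) (hn : 2 ≤ n) :
    StrictMonoOn (phi n) (Set.Icc (0 : ℝ) (1 - 1 / (n : ℝ))) ∧
      ∀ ε ∈ Set.Ico (0 : ℝ) (1 - 1 / (n : ℝ)), phi n ε < 1 := by
  have hn2 : (2:ℝ) ≤ (n:ℝ) := by exact_mod_cast hn
  have hn0 : (0:ℝ) < (n:ℝ) := by linarith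
  have h1n : 0 < 1/(n:ℝ) := by positivity
  have h1n2 : 1/(n:ℝ) ≤ 1/2 := by
    rw [div_le_div_iff₀ hn0 (by norm_num)]; linarith
  have hb0 : (0:ℝ) ≤ 1 - 1/(n:ℝ) := by linarith
  have hmono : StrictMonoOn (phi n) (Set.Icc (0:ℝ) (1 - 1/(n:ℝ))) := by
    apply strictMonoOn_of_deriv_pos (convex_Icc _ _) (phi_continuous n hn).continuousOn
    intro x hx
    rw [interior_Icc] at hx
    have hx1 : x < 1 := by have := hx.2; linarith
    rw [(phi_hasDerivAt n hx.1 hx1).deriv]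
    exact Dval_pos n hn hx.1 hx.2
  refine ⟨hmono, fun ε hε => ?_⟩
  have := hmono ⟨hε.1, hε.2.le⟩ ⟨hb0, le_rfl⟩ hε.2
  rwa [phi_endpoint n hn] at this

end
end

section
/- Let P be a nonempty finite set, A a nonempty finite set of labels with m := |A|, y : P → A, and let ℋ be a nonempty set of functions P → A that is closed under permutations, i.e., for every bijection π : A → A and every h ∈ ℋ the composite π∘h belongs to ℋ. Then for every probability distribution d on P there exists h ∈ ℋ whose score under d relative to y is at least (2 − m)/m. -/
open Finset

lemma perm_fiber_card {A : Type*} [Fintype A] [DecidableEq A] (a b b' : A) :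
    (univ.filter fun π : Equiv.Perm A => π a = b).card =
    (univ.filter fun π : Equiv.Perm A => π a = b').card := by
  apply Finset.card_bij' (fun π _ => Equiv.swap b b' * π) (fun π _ => Equiv.swap b b' * π)
  · intro π hπ
    simp only [mem_filter, mem_univ, true_and] at hπ ⊢
    simp [Equiv.Perm.mul_apply, hπ, Equiv.swap_apply_left]
  · intro π hπ
    simp only [mem_filter, mem_univ, true_and] at hπ ⊢
    simp [Equiv.Perm.mul_apply, hπ, Equiv.swap_apply_right]
  · intro π _; simp [← mul_assoc]
  · intro π _; simp [← mul_assoc]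

lemma perm_fiber_card_mul {A : Type*} [Fintype A] [Nonempty A] [DecidableEq A] (a b : A) :
    (univ.filter fun π : Equiv.Perm A => π a = b).card * Fintype.card A =
    Fintype.card (Equiv.Perm A) := by
  have h := Finset.card_eq_sum_card_fiberwise
    (s := (univ : Finset (Equiv.Perm A))) (t := (univ : Finset A)) (f := fun π => π a)
    (fun x _ => mem_univ _)
  rw [Finset.card_univ] at h
  rw [h, Finset.sum_congr rfl (fun b' _ => perm_fiber_card a b' b), Finset.sum_const,
    Finset.card_univ, smul_eq_mul, mul_comm]

/-- if a nonempty class `ℋ` of classifiers `P → A` is closed under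
permutations of the labels, then for every probability distribution `d` on `P` there is
some `h ∈ ℋ` whose score `Σ_p (𝟙[h(p)=y(p)] − 𝟙[h(p)≠y(p)])·d(p)` is at least
`(2 − m)/m`, where `m = |A|`. -/
theorem stmt13 {P A : Type*} [Fintype P] [Nonempty P] [Fintype A] [Nonempty A]
    [DecidableEq A] (y : P → A)
    (H : Set (P → A)) (hne : H.Nonempty)
    (hperm : ∀ π : Equiv.Perm A, ∀ h ∈ H, (fun p => π (h p)) ∈ H)
    (d : P → ℝ) (hd0 : ∀ p, 0 ≤ d p) (hd1 : ∀ p, d p ≤ 1) (hsum : ∑ p, d p = 1) :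
    ∃ h ∈ H,
      ((2 : ℝ) - Fintype.card A) / Fintype.card A ≤
        ∑ p, ((if h p = y p then (1 : ℝ) else 0) - (if h p = y p then 0 else 1)) * d p := by
  obtain ⟨h₀, hh₀⟩ := hne
  set c : ℕ := Fintype.card A with hc
  have hcpos : 0 < (c : ℝ) := by exact_mod_cast Fintype.card_pos
  set N : ℕ := Fintype.card (Equiv.Perm A) with hN
  -- the score of π ∘ h₀
  set F : Equiv.Perm A → ℝ := fun π =>
    ∑ p, ((if π (h₀ p) = y p then (1 : ℝ) else 0) - (if π (h₀ p) = y p then 0 else 1)) * d p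
    with hF
  have hsumF : ∑ π : Equiv.Perm A, F π = (N : ℝ) * ((2 - c) / c) := by
    rw [hF, Finset.sum_comm]
    have key : ∀ p : P,
        ∑ π : Equiv.Perm A,
          ((if π (h₀ p) = y p then (1 : ℝ) else 0) - (if π (h₀ p) = y p then 0 else 1)) * d p
        = (N : ℝ) * ((2 - c) / c) * d p := by
      intro p
      rw [← Finset.sum_mul]
      congr 1
      have : ∀ π : Equiv.Perm A,
          ((if π (h₀ p) = y p then (1 : ℝ) else 0) - (if π (h₀ p) = y p then 0 else 1))
          = 2 * (if π (h₀ p) = y p then (1 : ℝ) else 0) - 1 := by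
        intro π; by_cases hπ : π (h₀ p) = y p <;> simp [hπ] <;> norm_num
      rw [Finset.sum_congr rfl fun π _ => this π, Finset.sum_sub_distrib, ← Finset.mul_sum,
        Finset.sum_boole, Finset.sum_const, Finset.card_univ]
      have hS := perm_fiber_card_mul (h₀ p) (y p)
      have hSR : ((univ.filter fun π : Equiv.Perm A => π (h₀ p) = y p).card : ℝ) * c = N := by
        exact_mod_cast hS
      have hSval : ((univ.filter fun π : Equiv.Perm A => π (h₀ p) = y p).card : ℝ)
          = N / c := by field_simp at hSR ⊢; linarith
      rw [hSval]
      field_simp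
      ring
    rw [Finset.sum_congr rfl fun p _ => key p, ← Finset.mul_sum, hsum, mul_one]
  have hNpos : 0 < N := Fintype.card_pos
  have hex : ∃ π ∈ (univ : Finset (Equiv.Perm A)), (2 - (c : ℝ)) / c ≤ F π := by
    apply Finset.exists_le_of_sum_le univ_nonempty
    rw [hsumF, Finset.sum_const, Finset.card_univ, nsmul_eq_mul]
  obtain ⟨π, _, hπ⟩ := hex
  exact ⟨fun p => π (h₀ p), hperm π h₀ hh₀, hπ⟩
end

section
/- Let P be a nonempty finite subset of ℝ^d, A a finite set of labels with m := |A| ≥ 2, and y : P → A any labeling. Then there exists ρ > 0 such that for every probability distribution d on P there exists a single threshold classifier h : P → A whose score under d relative to y is at least (2 − m)/m + ρ. (Applied to every subset A_i ⊆ A with |A_i| ≥ 2 and every relabeling y_i : P → A_i, this says the set of single threshold classifiers is iteratively weakly learnable.) -/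
open Finset

/-- A single threshold classifier on `P ⊆ ℝ^dim`: there are `λ ∈ ℝ^dim`, `ω ∈ ℝ` and labels
`a⁺, a⁻` such that `h(p) = a⁺` if `λ·p ≥ ω` and `h(p) = a⁻` otherwise. -/
def IsSingleThreshold {dim : ℕ} {A : Type*} (P : Finset (Fin dim → ℝ)) (h : ↥P → A) : Prop :=
  ∃ (lam : Fin dim → ℝ) (ω : ℝ) (aPlus aMinus : A),
    ∀ p : ↥P, h p = if ω ≤ ∑ i, lam i * (p : Fin dim → ℝ) i then aPlus else aMinus

private lemma exists_lam_ne (dim : ℕ) (V : Finset (Fin dim → ℝ)) (hV : ∀ v ∈ V, v ≠ 0) :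
    ∃ lam : Fin dim → ℝ, ∀ v ∈ V, (∑ i, lam i * v i) ≠ 0 := by
  classical
  induction V using Finset.induction_on with
  | empty => exact ⟨0, by simp⟩
  | @insert a s ha ih =>
    obtain ⟨lam, hlam⟩ := ih (fun v hv => hV v (mem_insert_of_mem hv))
    have haa : (0:ℝ) < ∑ i, a i * a i := by
      have h0 : a ≠ 0 := hV a (mem_insert_self a s)
      obtain ⟨j, hj⟩ := Function.ne_iff.mp h0
      exact Finset.sum_pos' (fun i _ => mul_self_nonneg _)
        ⟨j, mem_univ j, mul_self_pos.mpr hj⟩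
    set B : Finset ℝ :=
      insert 0 ((insert a s).image
        (fun v => - (∑ i, lam i * v i) / (∑ i, a i * v i))) with hB
    obtain ⟨c, hc⟩ := Infinite.exists_notMem_finset B
    refine ⟨lam + c • a, fun v hv heq => ?_⟩
    have hexp : (∑ i, (lam + c • a) i * v i)
        = (∑ i, lam i * v i) + c * (∑ i, a i * v i) := by
      rw [Finset.mul_sum, ← Finset.sum_add_distrib]
      refine Finset.sum_congr rfl fun i _ => ?_
      simp [Pi.add_apply, Pi.smul_apply, smul_eq_mul]; ring
    rw [hexp] at heq
    by_cases hq : (∑ i, a i * v i) = 0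
    · rw [hq, mul_zero, add_zero] at heq
      rcases mem_insert.mp hv with rfl | hvs
      · exact absurd hq (ne_of_gt haa)
      · exact hlam v hvs heq
    · apply hc
      apply mem_insert_of_mem
      refine Finset.mem_image.mpr ⟨v, hv, ?_⟩
      field_simp
      linarith

private lemma exists_inj_lam {dim : ℕ} (P : Finset (Fin dim → ℝ)) :
    ∃ lam : Fin dim → ℝ, ∀ p ∈ P, ∀ q ∈ P,
      (∑ i, lam i * p i) = (∑ i, lam i * q i) → p = q := by
  classical
  set V := ((P ×ˢ P).filter fun pq => pq.1 ≠ pq.2).image (fun pq => pq.1 - pq.2) with hVdef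
  have hV : ∀ v ∈ V, v ≠ 0 := by
    intro v hv
    obtain ⟨pq, hpq, rfl⟩ := Finset.mem_image.mp hv
    exact sub_ne_zero_of_ne (mem_filter.mp hpq).2
  obtain ⟨lam, hlam⟩ := exists_lam_ne dim V hV
  refine ⟨lam, fun p hp q hq heq => ?_⟩
  by_contra hne
  refine hlam (p - q) ?_ ?_
  · exact Finset.mem_image.mpr ⟨(p, q), mem_filter.mpr ⟨mem_product.mpr ⟨hp, hq⟩, hne⟩, rfl⟩
  · have h : ∑ i, lam i * (p - q) i = (∑ i, lam i * p i) - (∑ i, lam i * q i) := by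
      rw [← Finset.sum_sub_distrib]
      exact Finset.sum_congr rfl fun i _ => by simp [mul_sub]
    rw [h, heq, sub_self]

set_option maxHeartbeats 1000000 in
/-- for any nonempty finite `P ⊂ ℝ^dim`, any finite label set `A` with
`m := |A| ≥ 2`, and any labeling `y : P → A`, there is a `ρ > 0` such that for every
probability distribution `d` on `P` some single threshold classifier's score under `d`
relative to `y` is at least `(2 − m)/m + ρ` (iterative weak learnability of single
threshold classifiers). -/
theorem stmt14 {dim : ℕ} (P : Finset (Fin dim → ℝ)) (hP : P.Nonempty)
    {A : Type*} [Fintype A] [DecidableEq A] (hA : 2 ≤ Fintype.card A)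
    (y : ↥P → A) :
    ∃ ρ : ℝ, 0 < ρ ∧
      ∀ d : ↥P → ℝ, (∀ p, 0 ≤ d p) → (∀ p, d p ≤ 1) → ∑ p, d p = 1 →
        ∃ h : ↥P → A, IsSingleThreshold P h ∧
          ((2 : ℝ) - Fintype.card A) / Fintype.card A + ρ ≤
            ∑ p, ((if h p = y p then (1 : ℝ) else 0) - (if h p = y p then 0 else 1)) * d p := by
  classical
  set M : ℝ := (Fintype.card A : ℝ) with hMdef
  set N : ℝ := (P.card : ℝ) with hNdef
  have hM : (2:ℝ) ≤ M := by rw [hMdef]; exact_mod_cast hA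
  have hM0 : (0:ℝ) < M := by linarith
  have hN : (1:ℝ) ≤ N := by
    rw [hNdef]; exact_mod_cast hP.card_pos
  have hN0 : (0:ℝ) < N := by linarith
  set ρ : ℝ := 1 / (M ^ 2 * N) with hρdef
  have hρpos : 0 < ρ := by positivity
  have hMu : M * (1 / M) = 1 := by field_simp
  have e1 : 1 / M = M * N * ρ := by rw [hρdef]; field_simp
  refine ⟨ρ, hρpos, ?_⟩
  intro d hd0 hd1 hdsum
  set Cor : (↥P → A) → ℝ := fun h => ∑ p, if h p = y p then d p else 0 with hCordef
  have score_eq : ∀ h : ↥P → A,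
      (∑ p, ((if h p = y p then (1 : ℝ) else 0) - (if h p = y p then 0 else 1)) * d p)
        = 2 * Cor h - 1 := by
    intro h
    have hpt : ∀ p : ↥P,
        ((if h p = y p then (1 : ℝ) else 0) - (if h p = y p then 0 else 1)) * d p
          = 2 * (if h p = y p then d p else 0) - d p := by
      intro p; by_cases hp : h p = y p <;> simp [hp] <;> ring
    rw [Finset.sum_congr rfl fun p _ => hpt p, Finset.sum_sub_distrib, hdsum,
      ← Finset.mul_sum]
  have key : ∀ h : ↥P → A, IsSingleThreshold P h → 1 / M + ρ / 2 ≤ Cor h →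
      ∃ h' : ↥P → A, IsSingleThreshold P h' ∧
        ((2 : ℝ) - Fintype.card A) / Fintype.card A + ρ ≤
          ∑ p, ((if h' p = y p then (1 : ℝ) else 0) - (if h' p = y p then 0 else 1)) * d p := by
    intro h hst hc
    refine ⟨h, hst, ?_⟩
    rw [score_eq h]
    have h2M : ((2:ℝ) - M) / M = 2 * (1 / M) - 1 := by field_simp
    rw [← hMdef, h2M]
    linarith
  set w : A → ℝ := fun c => ∑ p, if y p = c then d p else 0 with hwdef
  have hw0 : ∀ c, 0 ≤ w c := fun c => Finset.sum_nonneg fun p _ => by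
    by_cases h : y p = c <;> simp [h, hd0 p]
  have hwsum : ∑ c, w c = 1 := by
    rw [hwdef, Finset.sum_comm, ← hdsum]
    exact Finset.sum_congr rfl fun p _ => by simp
  have hAne : Nonempty A := Fintype.card_pos_iff.mp (by omega)
  obtain ⟨astar, -, hstar⟩ := Finset.exists_max_image (univ : Finset A) w univ_nonempty
  have hstar1 : 1 ≤ M * w astar := by
    calc (1:ℝ) = ∑ c, w c := hwsum.symm
    _ ≤ ∑ _c : A, w astar := Finset.sum_le_sum fun c _ => hstar c (mem_univ c)
    _ = M * w astar := by rw [Finset.sum_const, card_univ, nsmul_eq_mul, hMdef]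
  by_cases hcase : 1 / M + ρ / 2 ≤ w astar
  · -- constant classifier
    refine key (fun _ => astar) ⟨0, 0, astar, astar, fun p => by simp⟩ ?_
    have hCeq : Cor (fun _ => astar) = w astar := by
      refine Finset.sum_congr rfl fun p _ => ?_
      rcases eq_or_ne (y p) astar with h | h
      · simp [h]
      · simp [h, h.symm]
    rw [hCeq]; exact hcase
  · push_neg at hcase
    have hwle : w astar ≤ 1 / M + ρ / 2 := le_of_lt hcase
    have hwlow : ∀ c, 1 - (M - 1) * w astar ≤ w c := by
      intro c
      have h1 : w c + ∑ a ∈ univ.erase c, w a = 1 := by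
        rw [Finset.add_sum_erase _ w (mem_univ c)]; exact hwsum
      have h2 : ∑ a ∈ univ.erase c, w a ≤ (M - 1) * w astar := by
        calc ∑ a ∈ univ.erase c, w a ≤ ∑ _a ∈ univ.erase c, w astar :=
              Finset.sum_le_sum fun a _ => hstar a (mem_univ a)
        _ = ((univ.erase c).card : ℝ) * w astar := by rw [Finset.sum_const, nsmul_eq_mul]
        _ = (M - 1) * w astar := by
            rw [Finset.card_erase_of_mem (mem_univ c), card_univ]
            congr 1
            have h1' : 1 ≤ Fintype.card A := by omega
            rw [hMdef]
            push_cast [h1']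
            ring
      linarith
    obtain ⟨a, b, hab⟩ := Fintype.exists_pair_of_one_lt_card (α := A) (by omega)
    set S : Finset ↥P := univ.filter (fun p => y p = a ∨ y p = b) with hSdef
    set W : ℝ := ∑ p ∈ S, d p with hWdef
    have hWab : w a + w b = W := by
      rw [hWdef, hSdef, Finset.sum_filter, hwdef, ← Finset.sum_add_distrib]
      refine Finset.sum_congr rfl fun p _ => ?_
      by_cases h1 : y p = a <;> by_cases h2 : y p = b
      · exact absurd (h1.symm.trans h2) hab
      all_goals simp [h1, h2, hab, hab.symm]
    have hWlow : 2 * (M * N * ρ) - (M - 1) * ρ ≤ W := by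
      have hp := mul_le_mul_of_nonneg_left hwle (by linarith : (0:ℝ) ≤ M - 1)
      rw [← e1]
      nlinarith [hwlow a, hwlow b, hWab]
    have hMρ : (M - 1) * ρ ≤ M * N * ρ := by
      have h1 : M - 1 ≤ M * N := by nlinarith
      exact mul_le_mul_of_nonneg_right h1 (le_of_lt hρpos)
    have hWpos : 0 < W := by
      have : 0 < M * N * ρ := by positivity
      linarith
    have hSne : S.Nonempty := by
      rcases Finset.eq_empty_or_nonempty S with h | h
      · rw [hWdef, h, Finset.sum_empty] at hWpos; exact absurd hWpos (lt_irrefl 0)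
      · exact h
    obtain ⟨q, hqS, hqmax⟩ := Finset.exists_max_image S d hSne
    have hyq : y q = a ∨ y q = b := by
      have := Finset.mem_filter.mp (hSdef ▸ hqS)
      exact this.2
    have hdq : W ≤ N * d q := by
      calc W ≤ ∑ _p ∈ S, d q := Finset.sum_le_sum fun p hp => hqmax p hp
      _ = (S.card : ℝ) * d q := by rw [Finset.sum_const, nsmul_eq_mul]
      _ ≤ N * d q := by
          refine mul_le_mul_of_nonneg_right ?_ (hd0 q)
          have h1 : S.card ≤ P.card := by
            rw [hSdef]
            calc (univ.filter (fun p : ↥P => y p = a ∨ y p = b)).card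
                ≤ (univ : Finset ↥P).card := Finset.card_filter_le _ _
              _ = Fintype.card ↥P := Finset.card_univ
              _ = P.card := Fintype.card_coe P
          rw [hNdef]
          exact_mod_cast h1
    have main : ∀ a' b' : A, a' ≠ b' → y q = a' → w a' + w b' = W →
        ∃ h' : ↥P → A, IsSingleThreshold P h' ∧
          ((2 : ℝ) - Fintype.card A) / Fintype.card A + ρ ≤
            ∑ p, ((if h' p = y p then (1 : ℝ) else 0) - (if h' p = y p then 0 else 1)) * d p := by
      intro a' b' hab' hyq' hW'
      obtain ⟨lam, hlam⟩ := exists_inj_lam P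
      set v : ↥P → ℝ := fun p => ∑ i, lam i * (p : Fin dim → ℝ) i with hvdef
      have hvinj : ∀ p1 p2 : ↥P, v p1 = v p2 → p1 = p2 := fun p1 p2 h =>
        Subtype.ext (hlam _ p1.2 _ p2.2 h)
      obtain ⟨ω2, hω2⟩ : ∃ ω2 : ℝ, ∀ p : ↥P, ω2 ≤ v p ↔ v q < v p := by
        by_cases hT : (univ.filter (fun p : ↥P => v q < v p)).Nonempty
        · obtain ⟨p0, hp0T, hp0min⟩ :=
            Finset.exists_min_image (univ.filter (fun p : ↥P => v q < v p)) v hT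
          have hp0 : v q < v p0 := (Finset.mem_filter.mp hp0T).2
          refine ⟨v p0, fun p => ⟨fun h => lt_of_lt_of_le hp0 h, fun h => ?_⟩⟩
          exact hp0min p (Finset.mem_filter.mpr ⟨mem_univ _, h⟩)
        · refine ⟨v q + 1, fun p => ⟨fun h => by linarith, fun h => ?_⟩⟩
          exact absurd ⟨p, Finset.mem_filter.mpr ⟨mem_univ _, h⟩⟩ hT
      set h1 : ↥P → A := fun p => if v q ≤ v p then a' else b' with hh1
      set h2 : ↥P → A := fun p => if ω2 ≤ v p then b' else a' with hh2
      have hst1 : IsSingleThreshold P h1 := ⟨lam, v q, a', b', fun p => rfl⟩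
      have hst2 : IsSingleThreshold P h2 := ⟨lam, ω2, b', a', fun p => rfl⟩
      have hWS : (∑ p, if y p = a' ∨ y p = b' then d p else 0) = W := by
        rw [← hW', hwdef, ← Finset.sum_add_distrib]
        refine Finset.sum_congr rfl fun p _ => ?_
        by_cases ha : y p = a' <;> by_cases hb : y p = b'
        · exact absurd (ha.symm.trans hb) hab'
        all_goals simp [ha, hb, hab', hab'.symm]
      have hdq' : (∑ p, if p = q then d p else 0) = d q := by
        simp
      have hpt : ∀ p : ↥P,
          (if h1 p = y p then d p else 0) + (if h2 p = y p then d p else 0)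
            = (if y p = a' ∨ y p = b' then d p else 0) + (if p = q then d p else 0) := by
        intro p
        simp only [hh1, hh2]
        rcases lt_trichotomy (v p) (v q) with hlt | heq | hgt
        · have c1 : ¬ (v q ≤ v p) := not_le.mpr hlt
          have c2 : ¬ (ω2 ≤ v p) := fun h => absurd ((hω2 p).mp h) (by linarith)
          have hpq : p ≠ q := fun e => absurd (congrArg v e) (ne_of_lt hlt)
          rw [if_neg c1, if_neg c2, if_neg hpq]
          by_cases ha : y p = a' <;> by_cases hb : y p = b'
          · exact absurd (ha.symm.trans hb) hab'
          all_goals simp [ha, hb, hab', hab'.symm, Ne.symm]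
        · have hpq : p = q := hvinj p q heq
          subst hpq
          rw [if_pos (le_refl _), if_neg (fun h => absurd ((hω2 p).mp h) (lt_irrefl _)),
            if_pos rfl]
          simp [hyq']
        · have c1 : v q ≤ v p := le_of_lt hgt
          have c2 : ω2 ≤ v p := (hω2 p).mpr hgt
          have hpq : p ≠ q := fun e => absurd (congrArg v e) (ne_of_gt hgt)
          rw [if_pos c1, if_pos c2, if_neg hpq]
          by_cases ha : y p = a' <;> by_cases hb : y p = b'
          · exact absurd (ha.symm.trans hb) hab'
          all_goals simp [ha, hb, hab', hab'.symm, Ne.symm]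
      have hkeysum : Cor h1 + Cor h2 = W + d q := by
        calc Cor h1 + Cor h2
            = ∑ p, ((if h1 p = y p then d p else 0) + (if h2 p = y p then d p else 0)) := by
              rw [hCordef, ← Finset.sum_add_distrib]
          _ = ∑ p, ((if y p = a' ∨ y p = b' then d p else 0) + (if p = q then d p else 0)) :=
              Finset.sum_congr rfl fun p _ => hpt p
          _ = W + d q := by rw [Finset.sum_add_distrib, hWS, hdq']
      -- pick the better of the two classifiers
      have harith : ∀ C : ℝ, W + d q ≤ 2 * C → 1 / M + ρ / 2 ≤ C := by
        intro C hC
        rw [e1]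
        nlinarith [hWlow, hdq, hρpos, hN0, hM, hN, mul_pos hN0 hρpos,
          mul_le_mul_of_nonneg_left hWlow (le_of_lt hN0),
          mul_le_mul_of_nonneg_left hC (le_of_lt hN0)]
      by_cases hch : W + d q ≤ 2 * Cor h1
      · exact key h1 hst1 (harith _ hch)
      · refine key h2 hst2 (harith _ ?_)
        push_neg at hch
        linarith [hkeysum]
    rcases hyq with h | h
    · exact main a b hab h hWab
    · exact main b a (Ne.symm hab) h (by rw [add_comm]; exact hWab)
end
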